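/- The worst-case bound of Proposition 5 is tight: there exist positive integers n, p, a, k with 1 ≤ a ≤ n and a ≤ k ≤ p, a real n×p matrix X, a real η > 0, an optimal solution s° of Problem (2) satisfying η(s°) ≤ η, and an optimal solution s^A of Problem (7) with parameter η, such that π(s°) − π(s^A) = η. -/

import Mathlib

open Matrix BigOperators

noncomputable section

/-- Squared Frobenius norm of a real matrix. -/
def frobSq {n m : ℕ} (M : Matrix (Fin n) (Fin m) ℝ) : ℝ := ∑ i, ∑ j, (M i j) ^ 2

/-- A vector is binary if each entry is 0 or 1. -/
def IsBinary {p : ℕ} (s : Fin p → ℝ) : Prop := ∀ i, s i = 0 ∨ s i = 1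

/-- Stiefel set: matrices with orthonormal columns. -/
def Stiefel (n a : ℕ) : Set (Matrix (Fin n) (Fin a) ℝ) := {U | Uᵀ * U = 1}

/-- Squared Euclidean norm of column `i` of `X`. -/
def colNormSq {n p : ℕ} (X : Matrix (Fin n) (Fin p) ℝ) (i : Fin p) : ℝ :=
  ∑ r, (X r i) ^ 2

/-- μ(s) = Σ_i s_i ‖X_i‖². -/
def muF {n p : ℕ} (X : Matrix (Fin n) (Fin p) ℝ) (s : Fin p → ℝ) : ℝ :=
  ∑ i, s i * colNormSq X i

/-- η(s) = inf over Stiefel matrices U of ‖X diag(s) − U Uᵀ X diag(s)‖_F². -/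
def etaF {n p : ℕ} (X : Matrix (Fin n) (Fin p) ℝ) (a : ℕ) (s : Fin p → ℝ) : ℝ :=
  sInf ((fun U : Matrix (Fin n) (Fin a) ℝ =>
    frobSq (X * diagonal s - U * Uᵀ * (X * diagonal s))) '' Stiefel n a)

/-- π(s) = sup over Stiefel matrices U of ‖U Uᵀ X diag(s)‖_F². -/
def piF {n p : ℕ} (X : Matrix (Fin n) (Fin p) ℝ) (a : ℕ) (s : Fin p → ℝ) : ℝ :=
  sSup ((fun U : Matrix (Fin n) (Fin a) ℝ =>
    frobSq (U * Uᵀ * (X * diagonal s))) '' Stiefel n a)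

/-- Feasibility for Problem (2): binary with at most k ones. -/
def Feas {p : ℕ} (k : ℕ) (s : Fin p → ℝ) : Prop :=
  IsBinary s ∧ ∑ i, s i ≤ (k : ℝ)

/-- Optimality for Problem (2): feasible and maximizing π. -/
def Opt2 {n p : ℕ} (X : Matrix (Fin n) (Fin p) ℝ) (a k : ℕ) (s : Fin p → ℝ) : Prop :=
  Feas k s ∧ ∀ s' : Fin p → ℝ, Feas k s' → piF X a s' ≤ piF X a s

/-- Feasibility for Problem (7) with parameter η. -/
def Feas7 {n p : ℕ} (X : Matrix (Fin n) (Fin p) ℝ) (a k : ℕ) (η : ℝ) (s : Fin p → ℝ) : Prop :=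
  Feas k s ∧ etaF X a s ≤ η

/-- Optimality for Problem (7): feasible and maximizing μ. -/
def Opt7 {n p : ℕ} (X : Matrix (Fin n) (Fin p) ℝ) (a k : ℕ) (η : ℝ) (s : Fin p → ℝ) : Prop :=
  Feas7 X a k η s ∧ ∀ s' : Fin p → ℝ, Feas7 X a k η s' → muF X s' ≤ muF X s

/-! Take `a = 1`, `k = 2`, `η = 1` and `X = [e₀ e₀ e₁ e₂]`. For `U` in the Stiefel set, `U Uᵀ`
is an orthogonal projection, so `‖U Uᵀ M‖² + ‖M − U Uᵀ M‖² = ‖M‖²`; with `M = X diag(s)` this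
gives `π(s) ≤ μ(s)` and `η(s) ≤ μ(s) − ‖Uᵀ M‖²` for every such `U`. All columns have unit norm,
so `μ(s) = ∑ sᵢ ≤ k` on the feasible set. Hence `s° = (1,1,0,0)`, with `π(s°) = μ(s°) = k`,
solves (2) and has `η(s°) = 0`, while `s^A = (0,0,1,1)`, with `μ(s^A) = k`, solves (7) although
`π(s^A) = 1`. -/

section Projection

variable {n m a : ℕ}

lemma frobSq_nonneg (M : Matrix (Fin n) (Fin m) ℝ) : 0 ≤ frobSq M :=
  Finset.sum_nonneg fun _ _ => Finset.sum_nonneg fun _ _ => sq_nonneg _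

lemma frobSq_eq_trace (M : Matrix (Fin n) (Fin m) ℝ) : frobSq M = trace (Mᵀ * M) := by
  simp only [frobSq, trace, diag, mul_apply, transpose_apply, sq]
  exact Finset.sum_comm

lemma transpose_proj_mul_proj {U : Matrix (Fin n) (Fin a) ℝ} (hU : U ∈ Stiefel n a)
    (M : Matrix (Fin n) (Fin m) ℝ) :
    (U * Uᵀ * M)ᵀ * (U * Uᵀ * M) = Mᵀ * (U * Uᵀ * M) := by
  have hU' : Uᵀ * U = 1 := hU
  calc (U * Uᵀ * M)ᵀ * (U * Uᵀ * M) = Mᵀ * U * (Uᵀ * U) * Uᵀ * M := by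
        simp only [transpose_mul, transpose_transpose, Matrix.mul_assoc]
    _ = Mᵀ * (U * Uᵀ * M) := by rw [hU', Matrix.mul_one]; simp only [Matrix.mul_assoc]

lemma frobSq_proj {U : Matrix (Fin n) (Fin a) ℝ} (hU : U ∈ Stiefel n a)
    (M : Matrix (Fin n) (Fin m) ℝ) :
    frobSq (U * Uᵀ * M) = frobSq (Uᵀ * M) := by
  rw [frobSq_eq_trace, frobSq_eq_trace, transpose_proj_mul_proj hU]
  simp only [transpose_mul, transpose_transpose, Matrix.mul_assoc]

lemma frobSq_proj_add_frobSq_sub {U : Matrix (Fin n) (Fin a) ℝ} (hU : U ∈ Stiefel n a)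
    (M : Matrix (Fin n) (Fin m) ℝ) :
    frobSq (U * Uᵀ * M) + frobSq (M - U * Uᵀ * M) = frobSq M := by
  have hcross : (U * Uᵀ * M)ᵀ * M = Mᵀ * (U * Uᵀ * M) := by
    simp only [transpose_mul, transpose_transpose, Matrix.mul_assoc]
  simp only [frobSq_eq_trace, transpose_sub, Matrix.sub_mul, Matrix.mul_sub, hcross,
    transpose_proj_mul_proj hU, trace_sub]
  ring

lemma frobSq_proj_le {U : Matrix (Fin n) (Fin a) ℝ} (hU : U ∈ Stiefel n a)
    (M : Matrix (Fin n) (Fin m) ℝ) : frobSq (U * Uᵀ * M) ≤ frobSq M := by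
  linarith [frobSq_proj_add_frobSq_sub hU M, frobSq_nonneg (M - U * Uᵀ * M)]

end Projection

section SubsetValues

variable {n p a : ℕ} (X : Matrix (Fin n) (Fin p) ℝ) {s : Fin p → ℝ}

lemma frobSq_mul_diagonal_of_isBinary (hs : IsBinary s) : frobSq (X * diagonal s) = muF X s := by
  simp only [frobSq, muF, colNormSq, mul_diagonal, Finset.mul_sum]
  rw [Finset.sum_comm]
  refine Finset.sum_congr rfl fun j _ => Finset.sum_congr rfl fun r _ => ?_
  rcases hs j with h | h <;> simp [h]

lemma muF_eq_sum_of_colNormSq_eq_one (hX : ∀ j, colNormSq X j = 1) (s : Fin p → ℝ) :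
    muF X s = ∑ j, s j := by
  simp [muF, hX]

lemma piF_le {b : ℝ} (hb : 0 ≤ b)
    (h : ∀ U ∈ Stiefel n a, frobSq (Uᵀ * (X * diagonal s)) ≤ b) : piF X a s ≤ b :=
  Real.sSup_le (by rintro _ ⟨U, hU, rfl⟩; exact (frobSq_proj hU _).trans_le (h U hU)) hb

lemma piF_le_frobSq (s : Fin p → ℝ) : piF X a s ≤ frobSq (X * diagonal s) :=
  piF_le X (frobSq_nonneg _) fun _ hU => frobSq_proj hU _ ▸ frobSq_proj_le hU _

lemma piF_le_muF (hs : IsBinary s) : piF X a s ≤ muF X s :=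
  frobSq_mul_diagonal_of_isBinary X hs ▸ piF_le_frobSq X s

lemma le_piF {U : Matrix (Fin n) (Fin a) ℝ} (hU : U ∈ Stiefel n a) :
    frobSq (Uᵀ * (X * diagonal s)) ≤ piF X a s := by
  rw [← frobSq_proj hU]
  refine le_csSup ⟨frobSq (X * diagonal s), ?_⟩ ⟨U, hU, rfl⟩
  rintro _ ⟨V, hV, rfl⟩
  exact frobSq_proj_le hV _

lemma etaF_le {U : Matrix (Fin n) (Fin a) ℝ} (hU : U ∈ Stiefel n a) :
    etaF X a s ≤ frobSq (X * diagonal s) - frobSq (Uᵀ * (X * diagonal s)) := by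
  rw [← frobSq_proj hU, ← frobSq_proj_add_frobSq_sub hU, add_sub_cancel_left]
  refine csInf_le ⟨0, ?_⟩ ⟨U, hU, rfl⟩
  rintro _ ⟨V, -, rfl⟩
  exact frobSq_nonneg _

end SubsetValues

namespace TightExample

def X₀ : Matrix (Fin 3) (Fin 4) ℝ := !![1, 1, 0, 0; 0, 0, 1, 0; 0, 0, 0, 1]

def sOpt : Fin 4 → ℝ := ![1, 1, 0, 0]

def sApprox : Fin 4 → ℝ := ![0, 0, 1, 1]

def e₀ : Matrix (Fin 3) (Fin 1) ℝ := !![1; 0; 0]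

def e₁ : Matrix (Fin 3) (Fin 1) ℝ := !![0; 1; 0]

lemma colNormSq_X₀ (j : Fin 4) : colNormSq X₀ j = 1 := by
  fin_cases j <;> simp [colNormSq, X₀, Fin.sum_univ_three]

lemma isBinary_sOpt : IsBinary sOpt := by
  intro i; fin_cases i <;> simp [sOpt]

lemma isBinary_sApprox : IsBinary sApprox := by
  intro i; fin_cases i <;> simp [sApprox]

lemma sum_sOpt : ∑ i, sOpt i = 2 := by
  simp [sOpt, Fin.sum_univ_four]; norm_num

lemma sum_sApprox : ∑ i, sApprox i = 2 := by
  simp [sApprox, Fin.sum_univ_four]; norm_num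

lemma e₀_mem_stiefel : e₀ ∈ Stiefel 3 1 := by
  show e₀ᵀ * e₀ = 1
  ext i j
  fin_cases i; fin_cases j
  simp [e₀, mul_apply, Fin.sum_univ_three]

lemma e₁_mem_stiefel : e₁ ∈ Stiefel 3 1 := by
  show e₁ᵀ * e₁ = 1
  ext i j
  fin_cases i; fin_cases j
  simp [e₁, mul_apply, Fin.sum_univ_three]

lemma frobSq_e₀_sOpt : frobSq (e₀ᵀ * (X₀ * diagonal sOpt)) = 2 := by
  simp [frobSq, vecMul_diagonal, e₀, X₀, sOpt, mul_apply, Fin.sum_univ_three, Fin.sum_univ_four]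
  norm_num

lemma frobSq_e₁_sApprox : frobSq (e₁ᵀ * (X₀ * diagonal sApprox)) = 1 := by
  simp [frobSq, vecMul_diagonal, e₁, X₀, sApprox, mul_apply, Fin.sum_univ_three, Fin.sum_univ_four]

lemma frobSq_sApprox_le {U : Matrix (Fin 3) (Fin 1) ℝ} (hU : U ∈ Stiefel 3 1) :
    frobSq (Uᵀ * (X₀ * diagonal sApprox)) ≤ 1 := by
  have hunit : U 0 0 ^ 2 + U 1 0 ^ 2 + U 2 0 ^ 2 = 1 := by
    simpa [mul_apply, Fin.sum_univ_three, sq] using congrFun (congrFun (hU : Uᵀ * U = 1) 0) 0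
  have hval : frobSq (Uᵀ * (X₀ * diagonal sApprox)) = U 1 0 ^ 2 + U 2 0 ^ 2 := by
    simp [frobSq, vecMul_diagonal, X₀, sApprox, mul_apply, Fin.sum_univ_three, Fin.sum_univ_four]
  nlinarith [sq_nonneg (U 0 0)]

lemma piF_sOpt : piF X₀ 1 sOpt = 2 := by
  refine le_antisymm ?_ (frobSq_e₀_sOpt ▸ le_piF X₀ e₀_mem_stiefel)
  calc piF X₀ 1 sOpt ≤ muF X₀ sOpt := piF_le_muF X₀ isBinary_sOpt
    _ = 2 := by rw [muF_eq_sum_of_colNormSq_eq_one X₀ colNormSq_X₀, sum_sOpt]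

lemma piF_sApprox : piF X₀ 1 sApprox = 1 := by
  refine le_antisymm ?_ (frobSq_e₁_sApprox ▸ le_piF X₀ e₁_mem_stiefel)
  exact piF_le X₀ zero_le_one fun _ => frobSq_sApprox_le

lemma etaF_sOpt_nonpos : etaF X₀ 1 sOpt ≤ 0 := by
  have h := etaF_le X₀ (s := sOpt) e₀_mem_stiefel
  rw [frobSq_mul_diagonal_of_isBinary X₀ isBinary_sOpt,
    muF_eq_sum_of_colNormSq_eq_one X₀ colNormSq_X₀, sum_sOpt, frobSq_e₀_sOpt] at h
  linarith

lemma etaF_sApprox_le : etaF X₀ 1 sApprox ≤ 1 := by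
  have h := etaF_le X₀ (s := sApprox) e₁_mem_stiefel
  rw [frobSq_mul_diagonal_of_isBinary X₀ isBinary_sApprox,
    muF_eq_sum_of_colNormSq_eq_one X₀ colNormSq_X₀, sum_sApprox, frobSq_e₁_sApprox] at h
  linarith

end TightExample

open TightExample

/-- Tightness of the worst-case bound of Proposition 5. -/
theorem stmt_2 :
    ∃ (n p a k : ℕ) (X : Matrix (Fin n) (Fin p) ℝ) (η : ℝ) (so sA : Fin p → ℝ),
      1 ≤ a ∧ a ≤ n ∧ a ≤ k ∧ k ≤ p ∧ 0 < η ∧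
      Opt2 X a k so ∧ etaF X a so ≤ η ∧ Opt7 X a k η sA ∧
      piF X a so - piF X a sA = η := by
  have hμ := muF_eq_sum_of_colNormSq_eq_one X₀ colNormSq_X₀
  have feas_sOpt : Feas 2 sOpt := ⟨isBinary_sOpt, by rw [sum_sOpt]; norm_num⟩
  have feas_sApprox : Feas 2 sApprox := ⟨isBinary_sApprox, by rw [sum_sApprox]; norm_num⟩
  refine ⟨3, 4, 1, 2, X₀, 1, sOpt, sApprox, le_rfl, by norm_num, by norm_num, by norm_num,
    one_pos, ⟨feas_sOpt, ?_⟩, etaF_sOpt_nonpos.trans zero_le_one, ⟨⟨feas_sApprox, etaF_sApprox_le⟩, ?_⟩, ?_⟩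
  · intro s hs
    calc piF X₀ 1 s ≤ muF X₀ s := piF_le_muF X₀ hs.1
      _ = ∑ j, s j := hμ s
      _ ≤ piF X₀ 1 sOpt := by rw [piF_sOpt]; exact_mod_cast hs.2
  · intro s hs
    rw [hμ, hμ, sum_sApprox]
    exact_mod_cast hs.1.2
  · rw [piF_sOpt, piF_sApprox]
    norm_num
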